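/- arXiv:2305.14883 — 7 statements merged into one kernel-verified Lean document; each statement's English description precedes it below -/
import Mathlib

section
/- For binary vectors u, w ∈ F₂^{2n}, if w satisfies w_{i+n} = w_{i-l} + w_{i+l} for all i (indices mod n in the first block) and u satisfies the same relation, then the alternating form (u,w)_a = Σ_{i=1}^n (u_i w_{i+n} - u_{i+n} w_i) equals 0. -/
/-- If `u` and `w` in F₂^{2n} (written as pairs of blocks indexed cyclically
by `ZMod n`) are both shift-structured, i.e. the second block satisfies
`u₂ i = u₁ (i - l) + u₁ (i + l)`, then the alternating form vanishes. -/
theorem stmt_0 (n l : ℕ) [NeZero n]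
    (u₁ u₂ w₁ w₂ : ZMod n → ZMod 2)
    (hu : ∀ i : ZMod n, u₂ i = u₁ (i - (l : ZMod n)) + u₁ (i + (l : ZMod n)))
    (hw : ∀ i : ZMod n, w₂ i = w₁ (i - (l : ZMod n)) + w₁ (i + (l : ZMod n))) :
    ∑ i : ZMod n, (u₁ i * w₂ i - u₂ i * w₁ i) = 0 := by
  simp only [hu, hw]
  have h1 : ∑ i : ZMod n, u₁ i * w₁ (i - (l : ZMod n))
      = ∑ i : ZMod n, u₁ (i + (l : ZMod n)) * w₁ i := by
    rw [← Equiv.sum_comp (Equiv.addRight (l : ZMod n)) (fun i => u₁ i * w₁ (i - (l : ZMod n)))]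
    simp
  have h2 : ∑ i : ZMod n, u₁ i * w₁ (i + (l : ZMod n))
      = ∑ i : ZMod n, u₁ (i - (l : ZMod n)) * w₁ i := by
    rw [← Equiv.sum_comp (Equiv.subRight (l : ZMod n)) (fun i => u₁ i * w₁ (i + (l : ZMod n)))]
    simp
  simp only [mul_add, add_mul, Finset.sum_sub_distrib, Finset.sum_add_distrib, h1, h2]
  ring
end

section
/- If g ∈ F₂[X] divides Xⁿ - 1 and has degree d ≥ 1, then every nonzero element of the ideal generated by g in F₂[X]/(Xⁿ - 1) has cyclic burst length at least d. -/
open Polynomial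

/-- The polynomial Σ e_i X^i associated to a cyclic word e ∈ F₂ⁿ. -/
noncomputable def vecPoly (n : ℕ) [NeZero n] (e : ZMod n → ZMod 2) : Polynomial (ZMod 2) :=
  ∑ i : ZMod n, C (e i) * X ^ i.val

/-- `burstLe n ℓ e` : all nonzero coordinates of e lie within ℓ cyclically
consecutive positions, i.e. e has cyclic burst length at most ℓ. -/
def burstLe (n ℓ : ℕ) [NeZero n] (e : ZMod n → ZMod 2) : Prop :=
  ∃ r : ZMod n, ∀ i : ZMod n, e i ≠ 0 → ∃ t : ℕ, t < ℓ ∧ i = r + (t : ZMod n)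

lemma aux_dvd_mod (n a : ℕ) :
    (X ^ n - 1 : Polynomial (ZMod 2)) ∣ X ^ a - X ^ (a % n) := by
  have h : (X ^ a - X ^ (a % n) : Polynomial (ZMod 2))
      = X ^ (a % n) * ((X ^ n) ^ (a / n) - 1) := by
    rw [mul_sub, mul_one, ← pow_mul, ← pow_add, Nat.mod_add_div]
  rw [h]
  exact Dvd.dvd.mul_left (by simpa using sub_dvd_pow_sub_pow (X ^ n : Polynomial (ZMod 2)) 1 (a / n)) _

lemma aux_dvd_mod' (n a b : ℕ) (h : a % n = b % n) :
    (X ^ n - 1 : Polynomial (ZMod 2)) ∣ X ^ a - X ^ b := by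
  have : (X ^ a - X ^ b : Polynomial (ZMod 2))
      = (X ^ a - X ^ (a % n)) - (X ^ b - X ^ (b % n)) := by
    rw [h]; ring
  rw [this]
  exact dvd_sub (aux_dvd_mod n a) (aux_dvd_mod n b)

/-- if g ∈ F₂[X] divides Xⁿ - 1 and has degree d ≥ 1, then every nonzero
element of the ideal generated by g in F₂[X]/(Xⁿ-1) has cyclic burst length at least d. -/
theorem stmt_6 (n : ℕ) [NeZero n] (g : Polynomial (ZMod 2))
    (hdvd : g ∣ (X ^ n - 1 : Polynomial (ZMod 2)))
    (hd : 1 ≤ g.natDegree)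
    (e : ZMod n → ZMod 2) (he : e ≠ 0)
    (hmem : Ideal.Quotient.mk (Ideal.span {(X ^ n - 1 : Polynomial (ZMod 2))})
        (vecPoly n e) ∈
      Ideal.span {Ideal.Quotient.mk (Ideal.span {(X ^ n - 1 : Polynomial (ZMod 2))}) g}) :
    ∀ ℓ : ℕ, burstLe n ℓ e → g.natDegree ≤ ℓ := by
  intro ℓ hburst
  have hn : 0 < n := Nat.pos_of_ne_zero (NeZero.ne n)
  have hXn : (X ^ n - 1 : Polynomial (ZMod 2)) ≠ 0 := by
    simpa using X_pow_sub_C_ne_zero hn (1 : ZMod 2)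
  by_cases hln : n ≤ ℓ
  · -- degree g ≤ n ≤ ℓ
    refine le_trans (le_trans (natDegree_le_of_dvd hdvd hXn) ?_) hln
    simpa using (natDegree_X_pow_sub_C (n := n) (r := (1 : ZMod 2))).le
  push_neg at hln
  obtain ⟨r, hr⟩ := hburst
  -- Step 1: g ∣ vecPoly n e
  have hgvec : g ∣ vecPoly n e := by
    rw [Ideal.mem_span_singleton] at hmem
    obtain ⟨c, hc⟩ := hmem
    obtain ⟨q, rfl⟩ := Ideal.Quotient.mk_surjective c
    rw [← map_mul, Ideal.Quotient.eq, Ideal.mem_span_singleton] at hc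
    obtain ⟨k, hk⟩ := hc
    have : vecPoly n e = g * q + (X ^ n - 1) * k := by linear_combination hk
    rw [this]
    exact dvd_add (Dvd.intro _ rfl) (Dvd.dvd.mul_right hdvd _)
  -- the burst polynomial
  set p : Polynomial (ZMod 2) := ∑ t ∈ Finset.range ℓ, C (e (r + (t : ZMod n))) * X ^ t with hp
  -- rewrite vecPoly as sum over burst positions
  have hvec : vecPoly n e = ∑ t ∈ Finset.range ℓ, C (e (r + (t : ZMod n))) * X ^ (r + (t : ZMod n)).val := by
    rw [vecPoly]
    have hinj : ∀ x ∈ Finset.range ℓ, ∀ y ∈ Finset.range ℓ,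
        r + (x : ZMod n) = r + (y : ZMod n) → x = y := by
      intro t ht t' ht' h
      have h2 : (t : ZMod n) = (t' : ZMod n) := by
        have := congrArg (fun x => x - r) h
        simpa using this
      have := congrArg ZMod.val h2
      rwa [ZMod.val_natCast_of_lt (lt_trans (Finset.mem_range.mp ht) hln),
        ZMod.val_natCast_of_lt (lt_trans (Finset.mem_range.mp ht') hln)] at this
    rw [← Finset.sum_image (f := fun i : ZMod n => C (e i) * X ^ i.val) hinj]
    symm
    apply Finset.sum_subset (Finset.subset_univ _)
    intro i _ hi
    have : e i = 0 := by
      by_contra hne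
      obtain ⟨t, ht, rfl⟩ := hr i hne
      exact hi (Finset.mem_image.mpr ⟨t, Finset.mem_range.mpr ht, rfl⟩)
    simp [this]
  -- X^n - 1 divides vecPoly - X^{r.val} * p
  have hdiff : (X ^ n - 1 : Polynomial (ZMod 2)) ∣ vecPoly n e - X ^ r.val * p := by
    rw [hvec, hp, Finset.mul_sum, ← Finset.sum_sub_distrib]
    apply Finset.dvd_sum
    intro t ht
    have : C (e (r + (t : ZMod n))) * X ^ (r + (t : ZMod n)).val
        - X ^ r.val * (C (e (r + (t : ZMod n))) * X ^ t)
        = C (e (r + (t : ZMod n))) * (X ^ (r + (t : ZMod n)).val - X ^ (r.val + t)) := by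
      ring
    rw [this]
    refine Dvd.dvd.mul_left (aux_dvd_mod' n _ _ ?_) _
    rw [Nat.mod_eq_of_lt (ZMod.val_lt _), ZMod.val_add, ZMod.val_natCast]
    conv_rhs => rw [Nat.add_mod]
    conv_lhs => rw [Nat.add_mod, Nat.mod_mod_of_dvd _ dvd_rfl]
  -- Step 3 : g ∣ X^{r.val} * p
  have hgXp : g ∣ X ^ r.val * p := by
    have h1 : g ∣ vecPoly n e - X ^ r.val * p := dvd_trans hdvd hdiff
    have h2 := dvd_sub hgvec h1
    simpa using h2
  -- Step 4 : g is coprime to X, hence g ∣ p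
  have hcop : IsCoprime g (X ^ r.val : Polynomial (ZMod 2)) := by
    apply IsCoprime.pow_right
    rw [isCoprime_comm, Polynomial.irreducible_X.coprime_iff_not_dvd]
    intro hXg
    have hX1 : (X : Polynomial (ZMod 2)) ∣ X ^ n - 1 := hXg.trans hdvd
    rw [Polynomial.X_dvd_iff, Polynomial.coeff_sub, Polynomial.coeff_X_pow,
      if_neg hn.ne, Polynomial.coeff_one, if_pos rfl] at hX1
    simp at hX1
  have hgp : g ∣ p := hcop.dvd_of_dvd_mul_left hgXp
  -- Step 5 : p ≠ 0
  obtain ⟨i, hi⟩ := Function.ne_iff.mp he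
  obtain ⟨t0, ht0, rfl⟩ := hr i hi
  have hcoeff : p.coeff t0 = e (r + (t0 : ZMod n)) := by
    rw [hp, Polynomial.finset_sum_coeff]
    simp only [Polynomial.coeff_C_mul, Polynomial.coeff_X_pow, mul_ite, mul_one, mul_zero]
    rw [Finset.sum_ite_eq (Finset.range ℓ) t0 (fun t => e (r + (t : ZMod n)))]
    simp [Finset.mem_range.mpr ht0]
  have hi' : e (r + (t0 : ZMod n)) ≠ 0 := hi
  have hpne : p ≠ 0 := fun h0 => hi' (by rw [← hcoeff, h0, Polynomial.coeff_zero])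
  -- Step 6 : degree comparison
  have hdeg : p.degree < (ℓ : WithBot ℕ) := by
    refine lt_of_le_of_lt (Polynomial.degree_sum_le _ _) ?_
    rw [Finset.sup_lt_iff (by exact_mod_cast WithBot.bot_lt_coe ℓ)]
    intro t ht
    exact lt_of_le_of_lt (Polynomial.degree_C_mul_X_pow_le _ _)
      (by exact_mod_cast Finset.mem_range.mp ht)
  have hnat : p.natDegree < ℓ := (Polynomial.natDegree_lt_iff_degree_lt hpne).mpr hdeg
  exact le_of_lt (lt_of_le_of_lt (Polynomial.natDegree_le_of_dvd hgp hpne) hnat)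
end

section
/- Let g divide Xⁿ - 1 with deg g = n - k ≥ 1. Then the classical CRC code with check matrix H (built from g as in the CRC construction) detects all cyclic burst errors of length at most n - k: every nonzero error vector e of cyclic burst length at most n - k has nonzero syndrome e·Hᵀ. -/
open Polynomial

lemma xPowModDvd (N a : ℕ) : (X ^ N - 1 : Polynomial (ZMod 2)) ∣ X ^ a - X ^ (a % N) := by
  nth_rewrite 1 [show a = a % N + N * (a / N) from (Nat.mod_add_div a N).symm]
  rw [pow_add, pow_mul]
  have h : (X : Polynomial (ZMod 2)) ^ (a % N) * (X ^ N) ^ (a / N) - X ^ (a % N)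
      = X ^ (a % N) * ((X ^ N) ^ (a / N) - 1) := by ring
  rw [h]
  exact Dvd.dvd.mul_left
    (by simpa using sub_dvd_pow_sub_pow ((X : Polynomial (ZMod 2)) ^ N) 1 (a / N)) _

/-- if g divides Xⁿ - 1 and deg g = n - k ≥ 1, then the CRC code with
check matrix built from g detects all cyclic bursts of length at most n - k: every
nonzero error vector e of cyclic burst length at most n - k has nonzero syndrome,
i.e. e(X) mod g ≠ 0. -/
theorem stmt_7 (n k : ℕ) [NeZero n] (hkn : k < n) (g : Polynomial (ZMod 2))
    (hdvd : g ∣ (X ^ n - 1 : Polynomial (ZMod 2)))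
    (hdeg : g.natDegree = n - k)
    (e : ZMod n → ZMod 2) (he : e ≠ 0) (hb : burstLe n (n - k) e) :
    vecPoly n e %ₘ g ≠ 0 := by
  obtain ⟨r, hr⟩ := hb
  set m := n - k with hm
  have hm1 : 1 ≤ m := by omega
  have hmn : m ≤ n := by omega
  have hn1 : 1 ≤ n := Nat.one_le_iff_ne_zero.mpr (NeZero.ne n)
  -- the burst polynomial
  set b : Polynomial (ZMod 2) := ∑ t ∈ Finset.range m, C (e (r + (t : ZMod n))) * X ^ t
    with hbdef
  -- injectivity of t ↦ r + t on range m
  have hinj : ∀ t1 ∈ Finset.range m, ∀ t2 ∈ Finset.range m,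
      r + (t1 : ZMod n) = r + (t2 : ZMod n) → t1 = t2 := by
    intro t1 h1 t2 h2 h
    rw [Finset.mem_range] at h1 h2
    have h' : (t1 : ZMod n) = (t2 : ZMod n) := add_left_cancel h
    have := congrArg ZMod.val h'
    rwa [ZMod.val_cast_of_lt (lt_of_lt_of_le h1 hmn),
      ZMod.val_cast_of_lt (lt_of_lt_of_le h2 hmn)] at this
  -- vecPoly rewritten as a sum over the burst window
  have hvp : vecPoly n e
      = ∑ t ∈ Finset.range m, C (e (r + (t : ZMod n))) * X ^ ((r + (t : ZMod n)).val) := by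
    rw [vecPoly]
    rw [← Finset.sum_image (s := Finset.range m) (g := fun t : ℕ => r + (t : ZMod n))
      (f := fun i : ZMod n => C (e i) * X ^ i.val) hinj]
    apply (Finset.sum_subset (Finset.subset_univ _) _).symm
    intro i _ hi
    have : e i = 0 := by
      by_contra hei
      obtain ⟨t, ht, hti⟩ := hr i hei
      exact hi (Finset.mem_image.mpr ⟨t, Finset.mem_range.mpr ht, hti.symm⟩)
    simp [this]
  -- (X^n - 1) divides X^r.val * b - vecPoly n e
  have hdvd2 : (X ^ n - 1 : Polynomial (ZMod 2)) ∣ (X ^ r.val * b - vecPoly n e) := by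
    rw [hvp, hbdef, Finset.mul_sum, ← Finset.sum_sub_distrib]
    apply Finset.dvd_sum
    intro t _
    have key : X ^ r.val * (C (e (r + (t : ZMod n))) * X ^ t)
        - C (e (r + (t : ZMod n))) * X ^ ((r + (t : ZMod n)).val)
        = C (e (r + (t : ZMod n))) *
          (X ^ (r.val + t) - X ^ ((r + (t : ZMod n)).val)) := by
      rw [pow_add]; ring
    rw [key]
    apply Dvd.dvd.mul_left
    have hval : (r + (t : ZMod n)).val = (r.val + t) % n := by
      rw [ZMod.val_add, ZMod.val_natCast, Nat.add_mod, Nat.mod_mod_of_dvd t (dvd_refl n),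
        ← Nat.add_mod]
    rw [hval]
    exact xPowModDvd n (r.val + t)
  -- g is monic
  have hg0 : g ≠ 0 := by
    intro h
    rw [h] at hdeg
    simp at hdeg
    omega
  have hgm : g.Monic := by
    have h1 := Polynomial.leadingCoeff_ne_zero.mpr hg0
    have : ∀ x : ZMod 2, x ≠ 0 → x = 1 := by decide
    exact this _ h1
  intro hmod
  have hgvp : g ∣ vecPoly n e := (Polynomial.modByMonic_eq_zero_iff_dvd hgm).mp hmod
  -- g divides X^r.val * b
  have hgXb : g ∣ X ^ r.val * b := by
    have : X ^ r.val * b = vecPoly n e + (X ^ r.val * b - vecPoly n e) := by ring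
    rw [this]
    exact dvd_add hgvp (dvd_trans hdvd hdvd2)
  -- X does not divide g
  have hXg : ¬ (X : Polynomial (ZMod 2)) ∣ g := by
    intro hXg
    have : (X : Polynomial (ZMod 2)) ∣ X ^ n - 1 := dvd_trans hXg hdvd
    rw [Polynomial.X_dvd_iff, Polynomial.coeff_sub, Polynomial.coeff_X_pow,
      Polynomial.coeff_one, if_neg (Ne.symm (NeZero.ne n)), if_pos rfl] at this
    revert this
    decide
  have hcop : IsCoprime g ((X : Polynomial (ZMod 2)) ^ r.val) :=
    ((Polynomial.irreducible_X.coprime_iff_not_dvd.mpr hXg).symm.pow_right)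
  have hgb : g ∣ b := hcop.dvd_of_dvd_mul_left hgXb
  -- b is nonzero
  have hbne : b ≠ 0 := by
    obtain ⟨i, hi⟩ := Function.ne_iff.mp he
    simp only [Pi.zero_apply] at hi
    obtain ⟨t, ht, hti⟩ := hr i hi
    intro hb0
    have : b.coeff t = e (r + (t : ZMod n)) := by
      rw [hbdef, Polynomial.finset_sum_coeff]
      rw [Finset.sum_eq_single t]
      · simp
      · intro t' _ htne
        simp [Polynomial.coeff_X_pow, Ne.symm htne]
      · intro h
        exact absurd (Finset.mem_range.mpr ht) h
    rw [hb0] at this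
    simp at this
    rw [hti] at hi
    exact hi this.symm
  -- degree contradiction
  have hdegb : b.natDegree < m := by
    have : b.natDegree ≤ m - 1 := by
      apply Polynomial.natDegree_sum_le_of_forall_le
      intro t ht
      calc (C (e (r + (t : ZMod n))) * X ^ t).natDegree
          ≤ (X ^ t : Polynomial (ZMod 2)).natDegree := Polynomial.natDegree_C_mul_le _ _
        _ = t := Polynomial.natDegree_X_pow t
        _ ≤ m - 1 := by have := Finset.mem_range.mp ht; omega
    omega
  have := Polynomial.natDegree_le_of_dvd hgb hbne
  omega
end

section
/- Let H be any (n-k)×n matrix over F₂ and l an integer, and let B = H_{+l} + H_{-l}, where H_{±l} denotes H with its columns cyclically shifted by ±l positions. Then for any two rows u = (u' | u'') and w = (w' | w'') of the matrix G = [H | B] (rows of length 2n), the alternating form Σ_{j=1}^n (u'_j w''_j + u''_j w'_j) vanishes over F₂. -/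
/-- for any (n-k)×n matrix H over F₂ (columns indexed cyclically) and any
shift l, setting B = H_{+l} + H_{-l} (columns shifted cyclically by ±l), any two rows
u = (u'|u'') and w = (w'|w'') of G = [H | B] pair to zero under the alternating form
Σⱼ (u'ⱼ w''ⱼ + u''ⱼ w'ⱼ). -/
theorem stmt_9 (n k l : ℕ) [NeZero n]
    (H : Matrix (Fin (n - k)) (ZMod n) (ZMod 2))
    (B : Matrix (Fin (n - k)) (ZMod n) (ZMod 2))
    (hB : ∀ (i : Fin (n - k)) (j : ZMod n),
      B i j = H i (j - (l : ZMod n)) + H i (j + (l : ZMod n)))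
    (i₁ i₂ : Fin (n - k)) :
    ∑ j : ZMod n, (H i₁ j * B i₂ j + B i₁ j * H i₂ j) = 0 := by
  have key : ∀ (A C : Matrix (Fin (n-k)) (ZMod n) (ZMod 2)),
      ∑ j : ZMod n, A i₁ (j + (l : ZMod n)) * C i₂ j
        = ∑ j : ZMod n, A i₁ j * C i₂ (j - (l : ZMod n)) := by
    intro A C
    exact Fintype.sum_equiv (Equiv.addRight (l : ZMod n)) _ _ (fun j => by simp)
  have key2 : ∀ (A C : Matrix (Fin (n-k)) (ZMod n) (ZMod 2)),
      ∑ j : ZMod n, A i₁ (j - (l : ZMod n)) * C i₂ j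
        = ∑ j : ZMod n, A i₁ j * C i₂ (j + (l : ZMod n)) := by
    intro A C
    exact Fintype.sum_equiv (Equiv.subRight (l : ZMod n)) _ _ (fun j => by simp)
  simp only [hB, mul_add, add_mul]
  rw [Finset.sum_add_distrib, Finset.sum_add_distrib, Finset.sum_add_distrib,
    key H H, key2 H H]
  exact (by decide : ∀ x y : ZMod 2, x + y + (y + x) = 0) _ _
end

section
/- With G = [H | H_{+l} + H_{-l}] as the stabiliser generator matrix and syndrome of an error (e₁ | e₂) ∈ F₂ⁿ × F₂ⁿ defined as s = H e₂ᵀ - (H_{+l}+H_{-l}) e₁ᵀ, where H is the CRC check matrix of g, the syndrome polynomial equals X^{-l} e₁(X) + X^{l} e₁(X) + e₂(X) mod g, where X^{-l} means X^{n-l} and arithmetic is in F₂[X]/(Xⁿ-1) then reduced mod g. -/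
open Polynomial

lemma zmod2_monic_of_ne_zero {g : Polynomial (ZMod 2)} (hg : g ≠ 0) : g.Monic := by
  have h : g.leadingCoeff ≠ 0 := leadingCoeff_ne_zero.mpr hg
  have h2 : ∀ a : ZMod 2, a ≠ 0 → a = 1 := by decide
  exact h2 _ h

lemma pow_mod_period (n : ℕ) (g : Polynomial (ZMod 2)) (hg : g.Monic)
    (hdvd : g ∣ (X ^ n - 1 : Polynomial (ZMod 2))) (a : ℕ) :
    (X ^ a : Polynomial (ZMod 2)) %ₘ g = X ^ (a % n) %ₘ g := by
  have hkey : g ∣ (X ^ a - X ^ (a % n) : Polynomial (ZMod 2)) := by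
    have h1 : (X ^ a : Polynomial (ZMod 2)) - X ^ (a % n)
        = X ^ (a % n) * ((X ^ n) ^ (a / n) - 1 ^ (a / n)) := by
      rw [mul_sub, ← pow_mul, ← pow_add, one_pow, mul_one]
      congr 2
      exact (Nat.mod_add_div a n).symm
    rw [h1]
    exact Dvd.dvd.mul_left (hdvd.trans (sub_dvd_pow_sub_pow _ _ _)) _
  have h0 := (Polynomial.modByMonic_eq_zero_iff_dvd hg).mpr hkey
  rw [Polynomial.sub_modByMonic, sub_eq_zero] at h0
  exact h0

lemma term_coeff (n m : ℕ) [NeZero n] (g : Polynomial (ZMod 2)) (e : ZMod n → ZMod 2) (i : ℕ) :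
    ((X ^ m * vecPoly n e) %ₘ g).coeff i
      = ∑ j : ZMod n, e j * ((X ^ (m + j.val) %ₘ g).coeff i) := by
  have h1 : X ^ m * vecPoly n e = ∑ j : ZMod n, e j • (X ^ (m + j.val) : Polynomial (ZMod 2)) := by
    rw [vecPoly, Finset.mul_sum]
    refine Finset.sum_congr rfl fun j _ => ?_
    rw [smul_eq_C_mul, pow_add]
    ring
  rw [h1]
  have h2 : (∑ j : ZMod n, e j • (X ^ (m + j.val) : Polynomial (ZMod 2))) %ₘ g
      = ∑ j : ZMod n, e j • ((X ^ (m + j.val) : Polynomial (ZMod 2)) %ₘ g) := by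
    have h3 := map_sum (Polynomial.modByMonicHom g)
      (fun j : ZMod n => e j • (X ^ (m + j.val) : Polynomial (ZMod 2))) Finset.univ
    simp only [map_smul, Polynomial.modByMonicHom_apply, Polynomial.smul_modByMonic] at h3
    exact h3
  rw [h2, Polynomial.finset_sum_coeff]
  exact Finset.sum_congr rfl fun j _ => by rw [Polynomial.coeff_smul, smul_eq_mul]

/-- with stabiliser generator matrix G = [H | H_{+l} + H_{-l}], where H is
the CRC check matrix of g (column j holds the coefficients of X^j mod g, columns indexed
cyclically mod n), the syndrome s = H·e₂ᵀ - (H_{+l}+H_{-l})·e₁ᵀ of an error (e₁|e₂),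
viewed as a polynomial, equals X^{n-l} e₁(X) + X^{l} e₁(X) + e₂(X) computed in
F₂[X]/(Xⁿ-1) and then reduced mod g. -/
theorem stmt_10 (n k l : ℕ) [NeZero n] (hkn : k < n) (hl : l ≤ n)
    (g : Polynomial (ZMod 2))
    (hdvd : g ∣ (X ^ n - 1 : Polynomial (ZMod 2)))
    (hdeg : g.natDegree = n - k)
    (H : Fin (n - k) → ZMod n → ZMod 2)
    (hH : ∀ (i : Fin (n - k)) (j : ZMod n),
      H i j = (((X : Polynomial (ZMod 2)) ^ j.val) %ₘ g).coeff i)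
    (e₁ e₂ : ZMod n → ZMod 2)
    (s : Fin (n - k) → ZMod 2)
    (hs : ∀ i, s i = ∑ j : ZMod n,
      (H i j * e₂ j - (H i (j - (l : ZMod n)) + H i (j + (l : ZMod n))) * e₁ j)) :
    (∑ i : Fin (n - k), C (s i) * X ^ (i : ℕ)) =
      ((X ^ (n - l) * vecPoly n e₁ + X ^ l * vecPoly n e₁ + vecPoly n e₂)
          %ₘ (X ^ n - 1)) %ₘ g := by
  have hn : 0 < n := Nat.pos_of_ne_zero (NeZero.ne n)
  have hXn : (X ^ n - 1 : Polynomial (ZMod 2)).Monic := by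
    simpa using monic_X_pow_sub_C (1 : ZMod 2) hn.ne'
  have hg0 : g ≠ 0 := by
    rintro rfl
    exact hXn.ne_zero (zero_dvd_iff.mp hdvd)
  have hgm : g.Monic := zmod2_monic_of_ne_zero hg0
  set A : Polynomial (ZMod 2) :=
    X ^ (n - l) * vecPoly n e₁ + X ^ l * vecPoly n e₁ + vecPoly n e₂ with hA
  have hmodmod : (A %ₘ (X ^ n - 1)) %ₘ g = A %ₘ g := by
    conv_lhs => rw [Polynomial.modByMonic_eq_sub_mul_div A (X ^ n - 1)]
    rw [Polynomial.sub_modByMonic,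
      (Polynomial.modByMonic_eq_zero_iff_dvd hgm).mpr (hdvd.mul_right _), sub_zero]
  rw [hmodmod]
  -- value of j + m in ℕ
  have hval : ∀ (j : ZMod n) (m : ℕ), (j + (m : ZMod n)).val = (m + j.val) % n := by
    intro j m
    rw [ZMod.val_add, ZMod.val_natCast, Nat.add_mod_mod, Nat.add_comm]
  -- coefficient computation
  have hcoeff : ∀ i : Fin (n - k), (A %ₘ g).coeff i = s i := by
    intro i
    have hsplit : A %ₘ g = (X ^ (n - l) * vecPoly n e₁) %ₘ g
        + (X ^ l * vecPoly n e₁) %ₘ g + vecPoly n e₂ %ₘ g := by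
      rw [hA, Polynomial.add_modByMonic, Polynomial.add_modByMonic]
    have hV₂ : vecPoly n e₂ %ₘ g = (X ^ 0 * vecPoly n e₂) %ₘ g := by rw [pow_zero, one_mul]
    rw [hsplit, hV₂, Polynomial.coeff_add, Polynomial.coeff_add,
      term_coeff, term_coeff, term_coeff, hs i]
    rw [← Finset.sum_add_distrib, ← Finset.sum_add_distrib]
    symm
    refine Finset.sum_congr rfl fun j _ => ?_
    have hHj : H i j = ((X ^ (0 + j.val) : Polynomial (ZMod 2)) %ₘ g).coeff i := by
      rw [hH, Nat.zero_add]
    have hHp : H i (j + (l : ZMod n))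
        = ((X ^ (l + j.val) : Polynomial (ZMod 2)) %ₘ g).coeff i := by
      rw [hH, pow_mod_period n g hgm hdvd (l + j.val), ← hval]
    have hHm : H i (j - (l : ZMod n))
        = ((X ^ ((n - l) + j.val) : Polynomial (ZMod 2)) %ₘ g).coeff i := by
      have hsub : j - (l : ZMod n) = j + ((n - l : ℕ) : ZMod n) := by
        rw [Nat.cast_sub hl, ZMod.natCast_self, zero_sub]
        ring
      rw [hsub, hH, pow_mod_period n g hgm hdvd ((n - l) + j.val), ← hval]
    rw [hHj, hHp, hHm]
    have h2 : ∀ a b : ZMod 2, a - b = a + b := by decide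
    rw [h2]
    ring
  -- reconstruction of the polynomial from its low coefficients
  have hdlt : (A %ₘ g).degree < ((n - k : ℕ) : WithBot ℕ) := by
    have h := Polynomial.degree_modByMonic_lt A hgm
    rwa [Polynomial.degree_eq_natDegree hg0, hdeg] at h
  have hndlt : (A %ₘ g).natDegree < n - k := by
    by_cases h0 : A %ₘ g = 0
    · rw [h0, Polynomial.natDegree_zero]; omega
    · exact (Polynomial.natDegree_lt_iff_degree_lt h0).mpr hdlt
  have hrepr : A %ₘ g = ∑ i ∈ Finset.range (n - k), C ((A %ₘ g).coeff i) * X ^ i := by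
    conv_lhs => rw [Polynomial.as_sum_range' _ _ hndlt]
    exact Finset.sum_congr rfl fun i _ => (Polynomial.C_mul_X_pow_eq_monomial).symm
  have hfr := Fin.sum_univ_eq_sum_range
    (fun i : ℕ => (C ((A %ₘ g).coeff i) * X ^ i : Polynomial (ZMod 2))) (n - k)
  rw [hrepr, ← hfr]
  exact Finset.sum_congr rfl fun i _ => by rw [hcoeff i]
end

section
/- For any polynomial f of degree at most 4l - 1 over F₂, written as f = (f₁, f₂) with f₁ and f₂ each supported on coordinates 1..2l and embedded in F₂[X]/(Xⁿ-1) with n ≥ 4l + 1, if X^{n-l} f₁ + X^{l} f₁ + f₂ ≡ 0 (mod Xⁿ - 1), then f₁ = 0 and f₂ = 0. -/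
open Polynomial

/-- for l ≥ 1 and n ≥ 4l+1, if f₁, f₂ ∈ F₂[X] have degree at most 2l-1
and X^{n-l} f₁ + X^{l} f₁ + f₂ ≡ 0 (mod Xⁿ - 1), then f₁ = 0 and f₂ = 0. -/
theorem stmt_13 (l n : ℕ) (hl : 1 ≤ l) (hn : 4 * l + 1 ≤ n)
    (f₁ f₂ : Polynomial (ZMod 2))
    (h₁ : f₁.degree < (2 * l : ℕ)) (h₂ : f₂.degree < (2 * l : ℕ))
    (h : (X ^ n - 1 : Polynomial (ZMod 2)) ∣ X ^ (n - l) * f₁ + X ^ l * f₁ + f₂) :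
    f₁ = 0 ∧ f₂ = 0 := by
  have hln : l ≤ n := by omega
  have hkey : (X ^ n - 1 : Polynomial (ZMod 2)) ∣ f₁ + X ^ (2 * l) * f₁ + X ^ l * f₂ := by
    have h' : (X ^ n - 1 : Polynomial (ZMod 2)) ∣
        X ^ l * (X ^ (n - l) * f₁ + X ^ l * f₁ + f₂) := h.mul_left _
    have heq : X ^ l * (X ^ (n - l) * f₁ + X ^ l * f₁ + f₂)
        = (X ^ n - 1) * f₁ + (f₁ + X ^ (2 * l) * f₁ + X ^ l * f₂) := by
      have : l + (n - l) = n := by omega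
      ring_nf
      rw [← pow_add, this]
      ring
    rw [heq] at h'
    exact (dvd_add_right (Dvd.intro f₁ rfl)).mp h'
  have hdegn : ((X ^ n - 1 : Polynomial (ZMod 2))).degree = n := by
    simpa using degree_X_pow_sub_C (by omega : 0 < n) (1 : ZMod 2)
  have hdegP : (f₁ + X ^ (2 * l) * f₁ + X ^ l * f₂).degree < (n : WithBot ℕ) := by
    have d1 : f₁.degree < (n : WithBot ℕ) := h₁.trans_le (by exact_mod_cast by omega)
    have d2 : (X ^ (2 * l) * f₁).degree < (n : WithBot ℕ) := by
      calc (X ^ (2 * l) * f₁).degree ≤ (2 * l : ℕ) + f₁.degree := le_trans (degree_mul_le _ _) (by simp)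
        _ < (2 * l : ℕ) + (2 * l : ℕ) :=
            WithBot.add_lt_add_left (WithBot.natCast_ne_bot _) h₁
        _ ≤ (n : WithBot ℕ) := by exact_mod_cast by omega
    have d3 : (X ^ l * f₂).degree < (n : WithBot ℕ) := by
      calc (X ^ l * f₂).degree ≤ (l : ℕ) + f₂.degree := le_trans (degree_mul_le _ _) (by simp)
        _ < (l : ℕ) + (2 * l : ℕ) :=
            WithBot.add_lt_add_left (WithBot.natCast_ne_bot _) h₂
        _ ≤ (n : WithBot ℕ) := by exact_mod_cast by omega
    calc (f₁ + X ^ (2 * l) * f₁ + X ^ l * f₂).degree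
        ≤ max (max f₁.degree (X ^ (2 * l) * f₁).degree) (X ^ l * f₂).degree :=
          (degree_add_le _ _).trans (by gcongr; exact degree_add_le _ _)
      _ < (n : WithBot ℕ) := max_lt (max_lt d1 d2) d3
  have hP : f₁ + X ^ (2 * l) * f₁ + X ^ l * f₂ = 0 := by
    refine Polynomial.eq_zero_of_dvd_of_degree_lt hkey ?_
    rwa [hdegn]
  -- coefficient extraction
  have hc1 : ∀ j, (2 * l : ℕ) ≤ j → f₁.coeff j = 0 := fun j hj =>
    coeff_eq_zero_of_degree_lt (h₁.trans_le (by exact_mod_cast hj))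
  have hc2 : ∀ j, (2 * l : ℕ) ≤ j → f₂.coeff j = 0 := fun j hj =>
    coeff_eq_zero_of_degree_lt (h₂.trans_le (by exact_mod_cast hj))
  have hf₁ : f₁ = 0 := by
    ext j
    simp only [coeff_zero]
    by_cases hj2 : 2 * l ≤ j
    · exact hc1 j hj2
    by_cases hjl : j < l
    · have := congrArg (fun p => coeff p j) hP
      simp only [coeff_add, coeff_zero] at this
      rw [mul_comm (X ^ (2*l)) f₁, mul_comm (X ^ l) f₂] at this
      rw [coeff_mul_X_pow', coeff_mul_X_pow'] at this
      simp only [if_neg (by omega : ¬ 2 * l ≤ j), if_neg (by omega : ¬ l ≤ j),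
        add_zero] at this
      exact this
    · -- l ≤ j < 2l : use coefficient at 2l + j
      have := congrArg (fun p => coeff p (2 * l + j)) hP
      simp only [coeff_add, coeff_zero] at this
      rw [mul_comm (X ^ (2*l)) f₁, mul_comm (X ^ l) f₂] at this
      rw [coeff_mul_X_pow', coeff_mul_X_pow'] at this
      simp only [if_pos (by omega : 2 * l ≤ 2 * l + j), if_pos (by omega : l ≤ 2 * l + j)] at this
      rw [hc1 (2 * l + j) (by omega), hc2 (2 * l + j - l) (by omega)] at this
      simpa using this
  refine ⟨hf₁, ?_⟩
  have : (X : Polynomial (ZMod 2)) ^ l * f₂ = 0 := by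
    simpa [hf₁] using hP
  have hX : (X : Polynomial (ZMod 2)) ^ l ≠ 0 := pow_ne_zero _ X_ne_zero
  exact (mul_eq_zero.mp this).resolve_left hX
end

section
/- Let n = mk and consider the (n-k)×2n generator matrix G = [H | H_{+l} + H_{-l}] built from g(X) = Σ_{j=0}^{m-1} X^{jk} with l = ck for integers c, m. Then G is quasicyclic of index k: shifting all column indices (in both blocks, modulo n) by k and permuting the rows accordingly (row i ↦ row i+k mod n-k appropriately) leaves the row space of G invariant. -/
open Polynomial

private lemma stmt19_monic (m k : ℕ) (hm : 1 ≤ m) (hk : 1 ≤ k) :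
    (∑ j ∈ Finset.range m, (X : Polynomial (ZMod 2)) ^ (j * k)).Monic := by
  have h : (∑ j ∈ Finset.range m, (X : Polynomial (ZMod 2)) ^ (j * k))
      = ∑ j ∈ Finset.range m, ((X : Polynomial (ZMod 2)) ^ k) ^ j := by
    refine Finset.sum_congr rfl fun j _ => ?_
    rw [← pow_mul, Nat.mul_comm]
  rw [h]
  exact (monic_X_pow k).geom_sum (by simp; omega) (by omega)

private lemma stmt19_deg (m k : ℕ) :
    (∑ j ∈ Finset.range m, (X : Polynomial (ZMod 2)) ^ (j * k)).natDegree ≤ m * k - k := by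
  apply Polynomial.natDegree_sum_le_of_forall_le
  intro j hj
  rw [natDegree_X_pow]
  have hjm := Finset.mem_range.1 hj
  calc j * k ≤ (m - 1) * k := Nat.mul_le_mul_right k (by omega)
    _ = m * k - k := by rw [Nat.sub_one_mul]

private lemma stmt19_dvd (m k : ℕ) :
    (∑ j ∈ Finset.range m, (X : Polynomial (ZMod 2)) ^ (j * k)) ∣
      (X : Polynomial (ZMod 2)) ^ (m * k) - 1 := by
  refine ⟨X ^ k - 1, ?_⟩
  have h1 : ((X : Polynomial (ZMod 2)) ^ k) ^ m = X ^ (m * k) := by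
    rw [← pow_mul, Nat.mul_comm]
  have h2 : ∑ j ∈ Finset.range m, ((X : Polynomial (ZMod 2)) ^ k) ^ j
      = ∑ j ∈ Finset.range m, (X : Polynomial (ZMod 2)) ^ (j * k) :=
    Finset.sum_congr rfl fun j _ => by rw [← pow_mul, Nat.mul_comm]
  rw [← h1, ← h2, geom_sum_mul]

private lemma stmt19_modeq {g : Polynomial (ZMod 2)} {n : ℕ} (hg : g.Monic)
    (hdvd : g ∣ (X : Polynomial (ZMod 2)) ^ n - 1) {a b : ℕ}
    (hab : a % n = b % n) :
    (X : Polynomial (ZMod 2)) ^ a %ₘ g = X ^ b %ₘ g := by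
  suffices h : ∀ a : ℕ, (X : Polynomial (ZMod 2)) ^ a %ₘ g = X ^ (a % n) %ₘ g by
    rw [h a, h b, hab]
  intro a
  have hd : g ∣ (X : Polynomial (ZMod 2)) ^ a - X ^ (a % n) := by
    have h1 : (X : Polynomial (ZMod 2)) ^ a = X ^ (a % n) * ((X ^ n) ^ (a / n)) := by
      rw [← pow_mul, ← pow_add, Nat.mod_add_div]
    have h2 : X ^ (a % n) * (((X : Polynomial (ZMod 2)) ^ n) ^ (a / n)) - X ^ (a % n)
        = X ^ (a % n) * (((X : Polynomial (ZMod 2)) ^ n) ^ (a / n) - 1) := by ring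
    rw [h1, h2]
    exact Dvd.dvd.mul_left
      (hdvd.trans (by simpa using sub_dvd_pow_sub_pow ((X : Polynomial (ZMod 2)) ^ n) 1 (a / n))) _
  have h3 := (Polynomial.modByMonic_eq_zero_iff_dvd hg).2 hd
  rw [Polynomial.sub_modByMonic] at h3
  exact sub_eq_zero.1 h3

private lemma stmt19_mulmod {g p q : Polynomial (ZMod 2)} (hg : g.Monic) :
    (p * q) %ₘ g = (p * (q %ₘ g)) %ₘ g := by
  have hd : g ∣ p * q - p * (q %ₘ g) := by
    have h1 : q - q %ₘ g = g * (q /ₘ g) := by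
      rw [Polynomial.modByMonic_eq_sub_mul_div _ g]; ring
    have h2 : p * q - p * (q %ₘ g) = p * (q - q %ₘ g) := by ring
    rw [h2, h1]
    exact ⟨p * (q /ₘ g), by ring⟩
  have h3 := (Polynomial.modByMonic_eq_zero_iff_dvd hg).2 hd
  rw [Polynomial.sub_modByMonic] at h3
  exact sub_eq_zero.1 h3


/-- let n = mk, l = ck, g(X) = Σ_{j=0}^{m-1} X^{jk}, and let
G = [H | H_{+l} + H_{-l}] be the (n-k)×2n generator matrix built from the CRC check
matrix H of g (column j of H holds the coefficients of X^j mod g, columns indexed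
cyclically mod n, and the row of index i pairs coordinate j with coordinate j+n).
Then G is quasicyclic of index k: the row space of G is invariant under the
simultaneous cyclic shift by k of positions 1..n and positions n+1..2n. -/
theorem stmt_19 (m k c : ℕ) (hm : 1 ≤ m) (hk : 1 ≤ k) [NeZero (m * k)]
    (g : Polynomial (ZMod 2))
    (hg : g = ∑ j ∈ Finset.range m, (X : Polynomial (ZMod 2)) ^ (j * k))
    (H : Fin (m * k - k) → ZMod (m * k) → ZMod 2)
    (hH : ∀ (i : Fin (m * k - k)) (j : ZMod (m * k)),
      H i j = (((X : Polynomial (ZMod 2)) ^ j.val) %ₘ g).coeff i)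
    (rows : Fin (m * k - k) → (ZMod (m * k) → ZMod 2 × ZMod 2))
    (hrows : ∀ i j, rows i j =
      (H i j, H i (j - ((c * k : ℕ) : ZMod (m * k))) + H i (j + ((c * k : ℕ) : ZMod (m * k)))))
    (v : ZMod (m * k) → ZMod 2 × ZMod 2) :
    v ∈ Submodule.span (ZMod 2) (Set.range rows) ↔
      (fun j => v (j - ((k : ℕ) : ZMod (m * k)))) ∈
        Submodule.span (ZMod 2) (Set.range rows) := by
  have hmonic : g.Monic := by rw [hg]; exact stmt19_monic m k hm hk
  have hdeg : g.natDegree ≤ m * k - k := by rw [hg]; exact stmt19_deg m k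
  have hdvd : g ∣ (X : Polynomial (ZMod 2)) ^ (m * k) - 1 := by rw [hg]; exact stmt19_dvd m k
  have hk0 : 0 < m * k := Nat.pos_of_ne_zero (NeZero.ne _)
  -- core expansion
  have core : ∀ (i : Fin (m * k - k)) (w : ZMod (m * k)),
      H i (w - ((k : ℕ) : ZMod (m * k))) =
        ∑ i' : Fin (m * k - k),
          (((X : Polynomial (ZMod 2)) ^ ((m * k - k) + i'.val) %ₘ g).coeff (i : ℕ)) * H i' w := by
    intro i w
    have hD : 0 < m * k - k := Nat.lt_of_le_of_lt (Nat.zero_le _) i.isLt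
    have hsub : w - ((k : ℕ) : ZMod (m * k)) = w + (((m * k - k : ℕ)) : ZMod (m * k)) := by
      have hneg : (((m * k - k : ℕ)) : ZMod (m * k)) = - ((k : ℕ) : ZMod (m * k)) := by
        have hadd : ((m * k - k) + k : ℕ) = m * k := by omega
        rw [eq_neg_iff_add_eq_zero, ← Nat.cast_add, hadd, ZMod.natCast_self]
      rw [hneg]; ring
    have hval : (w - ((k : ℕ) : ZMod (m * k))).val % (m * k)
        = ((m * k - k) + w.val) % (m * k) := by
      rw [hsub, ZMod.val_add, ZMod.val_natCast_of_lt (by omega)]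
      rw [Nat.mod_mod_of_dvd _ dvd_rfl, Nat.add_comm]
    have h2 : (X : Polynomial (ZMod 2)) ^ (w - ((k : ℕ) : ZMod (m * k))).val %ₘ g
        = X ^ ((m * k - k) + w.val) %ₘ g := stmt19_modeq hmonic hdvd hval
    set r := (X : Polynomial (ZMod 2)) ^ w.val %ₘ g with hr
    have h3 : (X : Polynomial (ZMod 2)) ^ ((m * k - k) + w.val) %ₘ g
        = ((X : Polynomial (ZMod 2)) ^ (m * k - k) * r) %ₘ g := by
      rw [pow_add]; exact stmt19_mulmod hmonic
    have hrdeg : r.natDegree < m * k - k := by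
      rcases eq_or_ne r 0 with h0 | h0
      · simpa [h0] using hD
      · have hlt := Polynomial.degree_modByMonic_lt ((X : Polynomial (ZMod 2)) ^ w.val) hmonic
        have hlt2 : r.degree < ((m * k - k : ℕ) : WithBot ℕ) :=
          lt_of_lt_of_le hlt (le_trans Polynomial.degree_le_natDegree (by exact_mod_cast hdeg))
        exact (Polynomial.natDegree_lt_iff_degree_lt h0).2 hlt2
    have hrsum : (X : Polynomial (ZMod 2)) ^ (m * k - k) * r
        = ∑ i' ∈ Finset.range (m * k - k),
            r.coeff i' • (X : Polynomial (ZMod 2)) ^ ((m * k - k) + i') := by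
      conv_lhs => rw [Polynomial.as_sum_range' r (m * k - k) hrdeg]
      rw [Finset.mul_sum]
      refine Finset.sum_congr rfl fun i' _ => ?_
      rw [← Polynomial.smul_X_eq_monomial, mul_smul_comm, ← pow_add]
    have h6 : ((X : Polynomial (ZMod 2)) ^ (m * k - k) * r) %ₘ g
        = ∑ i' ∈ Finset.range (m * k - k),
            r.coeff i' • ((X : Polynomial (ZMod 2)) ^ ((m * k - k) + i') %ₘ g) := by
      rw [hrsum]
      have hmap := map_sum (Polynomial.modByMonicHom g)
        (fun i' => r.coeff i' • (X : Polynomial (ZMod 2)) ^ ((m * k - k) + i'))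
        (Finset.range (m * k - k))
      simp only [show ∀ p : Polynomial (ZMod 2), Polynomial.modByMonicHom g p = p %ₘ g
        from fun _ => rfl] at hmap
      rw [hmap]
      refine Finset.sum_congr rfl fun i' _ => ?_
      rw [Polynomial.smul_modByMonic]
    rw [hH, h2, h3, h6, Polynomial.finset_sum_coeff]
    rw [← Fin.sum_univ_eq_sum_range
      (fun i' => (r.coeff i' • ((X : Polynomial (ZMod 2)) ^ ((m * k - k) + i') %ₘ g)).coeff (i : ℕ))
      (m * k - k)]
    refine Finset.sum_congr rfl fun i' _ => ?_
    rw [Polynomial.coeff_smul, smul_eq_mul, hH, mul_comm]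
  -- each shifted row lies in the span
  have hrowmem : ∀ i : Fin (m * k - k),
      (fun j => rows i (j - ((k : ℕ) : ZMod (m * k)))) ∈
        Submodule.span (ZMod 2) (Set.range rows) := by
    intro i
    have hre : (fun j => rows i (j - ((k : ℕ) : ZMod (m * k))))
        = ∑ i' : Fin (m * k - k),
            (((X : Polynomial (ZMod 2)) ^ ((m * k - k) + i'.val) %ₘ g).coeff (i : ℕ)) • rows i' := by
      funext j
      rw [Finset.sum_apply]
      simp only [Pi.smul_apply]
      have hterm : ∀ i' : Fin (m * k - k),
          (((X : Polynomial (ZMod 2)) ^ ((m * k - k) + i'.val) %ₘ g).coeff (i : ℕ)) • rows i' j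
          = ((((X : Polynomial (ZMod 2)) ^ ((m * k - k) + i'.val) %ₘ g).coeff (i : ℕ)) * H i' j,
             (((X : Polynomial (ZMod 2)) ^ ((m * k - k) + i'.val) %ₘ g).coeff (i : ℕ)) *
               (H i' (j - ((c * k : ℕ) : ZMod (m * k))) + H i' (j + ((c * k : ℕ) : ZMod (m * k))))) := by
        intro i'
        rw [hrows]
        rfl
      rw [Finset.sum_congr rfl fun i' _ => hterm i']
      rw [hrows]
      refine Prod.ext ?_ ?_
      · rw [Prod.fst_sum]
        simpa using core i j
      · rw [Prod.snd_sum]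
        have e2 := core i (j - ((c * k : ℕ) : ZMod (m * k)))
        have e3 := core i (j + ((c * k : ℕ) : ZMod (m * k)))
        rw [sub_right_comm] at e2
        rw [← sub_add_eq_add_sub] at e3
        dsimp only
        rw [e2, e3, ← Finset.sum_add_distrib]
        exact Finset.sum_congr rfl fun i' _ => (mul_add _ _ _).symm
    rw [hre]
    exact Submodule.sum_mem _ fun i' _ =>
      Submodule.smul_mem _ _ (Submodule.subset_span ⟨i', rfl⟩)
  -- the span is closed under the shift
  have hclosed : ∀ w ∈ Submodule.span (ZMod 2) (Set.range rows),
      (fun j => w (j - ((k : ℕ) : ZMod (m * k)))) ∈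
        Submodule.span (ZMod 2) (Set.range rows) := by
    intro w hw
    induction hw using Submodule.span_induction with
    | mem x hx =>
      obtain ⟨i, rfl⟩ := hx
      exact hrowmem i
    | zero => exact Submodule.zero_mem _
    | add x y _ _ hx hy => exact Submodule.add_mem _ hx hy
    | smul a x _ hx => exact Submodule.smul_mem _ a hx
  -- the shift, iterated
  set S : (ZMod (m * k) → ZMod 2 × ZMod 2) → (ZMod (m * k) → ZMod 2 × ZMod 2) :=
    fun w j => w (j - ((k : ℕ) : ZMod (m * k))) with hS
  have hiter_mem : ∀ t : ℕ, ∀ w ∈ Submodule.span (ZMod 2) (Set.range rows),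
      S^[t] w ∈ Submodule.span (ZMod 2) (Set.range rows) := by
    intro t
    induction t with
    | zero => intro w hw; simpa using hw
    | succ t ih =>
      intro w hw
      rw [Function.iterate_succ_apply]
      exact ih _ (hclosed w hw)
  have hiter_eq : ∀ (t : ℕ) (w : ZMod (m * k) → ZMod 2 × ZMod 2),
      S^[t] w = fun j => w (j - ((t * k : ℕ) : ZMod (m * k))) := by
    intro t
    induction t with
    | zero => intro w; simp
    | succ t ih =>
      intro w
      rw [Function.iterate_succ_apply, ih]
      funext j
      show w (j - ((t * k : ℕ) : ZMod (m * k)) - ((k : ℕ) : ZMod (m * k))) = _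
      congr 1
      push_cast
      ring
  constructor
  · intro hv
    exact hclosed v hv
  · intro hv
    have h1 : S^[m - 1] (S v) ∈ Submodule.span (ZMod 2) (Set.range rows) :=
      hiter_mem (m - 1) (S v) hv
    rw [← Function.iterate_succ_apply] at h1
    have hm1 : (m - 1) + 1 = m := by omega
    rw [Nat.succ_eq_add_one, hm1, hiter_eq] at h1
    simpa [ZMod.natCast_self] using h1
end
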